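/- arXiv:2111.02858 — 3 statements merged into one kernel-verified Lean document; each statement's English description precedes it below -/
import Mathlib

section
/- Define Tr_A : A → ℂ on homogeneous elements by Tr_A(P⊗Q) = Tr(P)·Tr(Q) and Tr_A(P⊠Q) = Tr(PQ), extended linearly. Then Tr_A is tracial on (A, ⋆): Tr_A(a ⋆ b) = Tr_A(b ⋆ a) for all a, b ∈ A. -/
open TensorProduct

noncomputable section
namespace FRG

variable (R : Type*) [Ring R] [Algebra ℂ R]

/-- `S R = R ⊗[ℂ] R`, the underlying space of each of the two components of `A`. -/
abbrev S := R ⊗[ℂ] R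

/-- reversed multiplication: `U ⊗ P ↦ P * U`. -/
def mulRev : S R →ₗ[ℂ] R :=
  (LinearMap.mul' ℂ R) ∘ₗ (TensorProduct.comm ℂ R R).toLinearMap

/-- `(U⊗W) ⊗ (P⊗Q) ↦ (P*U) ⊗ (W*Q)` : the ⊗⋆⊗ part. -/
def m1 : S R ⊗[ℂ] S R →ₗ[ℂ] S R :=
  (TensorProduct.map (mulRev R) (LinearMap.mul' ℂ R)) ∘ₗ
    (TensorProduct.tensorTensorTensorComm ℂ R R R R).toLinearMap

/-- `W ⊗ (P⊗Q) ↦ P*W*Q`. -/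
def inner2 : R ⊗[ℂ] (S R) →ₗ[ℂ] R :=
  (LinearMap.mul' ℂ R) ∘ₗ (TensorProduct.map (mulRev R) LinearMap.id) ∘ₗ
    (TensorProduct.assoc ℂ R R R).symm.toLinearMap

/-- `(U⊠W) ⊗ (P⊗Q) ↦ U ⊠ (P*W*Q)` : the ⊠⋆⊗ part. -/
def m2 : S R ⊗[ℂ] S R →ₗ[ℂ] S R :=
  (TensorProduct.map LinearMap.id (inner2 R)) ∘ₗ
    (TensorProduct.assoc ℂ R R (S R)).toLinearMap

/-- `(U⊗W) ⊗ P ↦ W*P*U`. -/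
def tri3 : (S R) ⊗[ℂ] R →ₗ[ℂ] R :=
  (mulRev R) ∘ₗ (TensorProduct.map LinearMap.id (LinearMap.mul' ℂ R)) ∘ₗ
    (TensorProduct.assoc ℂ R R R).toLinearMap

/-- `(U⊗W) ⊗ (P⊠Q) ↦ (W*P*U) ⊠ Q` : the ⊗⋆⊠ part. -/
def m3 : S R ⊗[ℂ] S R →ₗ[ℂ] S R :=
  (TensorProduct.map (tri3 R) LinearMap.id) ∘ₗ
    (TensorProduct.assoc ℂ (S R) R R).symm.toLinearMap

/-- `(U⊠W) ⊗ (P⊠Q) ↦ Tr(W*P) • (U ⊠ Q)` : the ⊠⋆⊠ part. -/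
def m4 (Tr : R →ₗ[ℂ] ℂ) : S R ⊗[ℂ] S R →ₗ[ℂ] S R :=
  (TensorProduct.rid ℂ (S R)).toLinearMap ∘ₗ
  (TensorProduct.map LinearMap.id (Tr ∘ₗ LinearMap.mul' ℂ R)) ∘ₗ
  (TensorProduct.tensorTensorTensorComm ℂ R R R R).toLinearMap ∘ₗ
  (TensorProduct.map LinearMap.id (TensorProduct.comm ℂ R R).toLinearMap)

/-- `A = (R ⊗ R) ⊕ (R ⊠ R)`; first component is the ⊗-part, second the ⊠-part. -/
abbrev A := S R × S R

/-- the functional renormalization product ⋆ on `A`. -/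
def star' (Tr : R →ₗ[ℂ] ℂ) (a b : A R) : A R :=
  (m1 R (a.1 ⊗ₜ[ℂ] b.1),
   m2 R (a.2 ⊗ₜ[ℂ] b.1) + m3 R (a.1 ⊗ₜ[ℂ] b.2) + m4 R Tr (a.2 ⊗ₜ[ℂ] b.2))

/-- homogeneous element `U ⊗ W` of the ⊗-component. -/
def otimes (U W : R) : A R := (U ⊗ₜ[ℂ] W, 0)

/-- homogeneous element `U ⊠ W` of the ⊠-component. -/
def boxtimes (U W : R) : A R := (0, U ⊗ₜ[ℂ] W)

/-- `Tr_A (P⊗Q) = Tr P * Tr Q`, `Tr_A (P⊠Q) = Tr (P*Q)`. -/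
def TrA (Tr : R →ₗ[ℂ] ℂ) (a : A R) : ℂ :=
  (TensorProduct.lid ℂ ℂ) (TensorProduct.map Tr Tr a.1) + Tr ((LinearMap.mul' ℂ R) a.2)

/-- the tilde involution: flips both tensor components. -/
def tilde (a : A R) : A R :=
  ((TensorProduct.comm ℂ R R) a.1, (TensorProduct.comm ℂ R R) a.2)


lemma m1_tmul (U W P Q : R) :
    m1 R ((U ⊗ₜ[ℂ] W) ⊗ₜ[ℂ] (P ⊗ₜ[ℂ] Q)) = (P*U) ⊗ₜ[ℂ] (W*Q) := by
  simp [m1, mulRev, TensorProduct.tensorTensorTensorComm_tmul]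

lemma m2_tmul (U W P Q : R) :
    m2 R ((U ⊗ₜ[ℂ] W) ⊗ₜ[ℂ] (P ⊗ₜ[ℂ] Q)) = U ⊗ₜ[ℂ] (P*W*Q) := by
  simp [m2, inner2, mulRev, mul_assoc]

lemma m3_tmul (U W P Q : R) :
    m3 R ((U ⊗ₜ[ℂ] W) ⊗ₜ[ℂ] (P ⊗ₜ[ℂ] Q)) = (W*P*U) ⊗ₜ[ℂ] Q := by
  simp [m3, tri3, mulRev, mul_assoc]

lemma m4_tmul (Tr : R →ₗ[ℂ] ℂ) (U W P Q : R) :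
    m4 R Tr ((U ⊗ₜ[ℂ] W) ⊗ₜ[ℂ] (P ⊗ₜ[ℂ] Q)) = Tr (W*P) • (U ⊗ₜ[ℂ] Q) := by
  simp [m4, TensorProduct.tensorTensorTensorComm_tmul, TensorProduct.smul_tmul]

/-- the ⊗⊗-piece of `Tr_A ∘ ⋆` as a linear map. -/
def F1 (Tr : R →ₗ[ℂ] ℂ) : S R ⊗[ℂ] S R →ₗ[ℂ] ℂ :=
  (TensorProduct.lid ℂ ℂ).toLinearMap ∘ₗ TensorProduct.map Tr Tr ∘ₗ m1 R

/-- the ⊠⊗-piece. -/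
def F2 (Tr : R →ₗ[ℂ] ℂ) : S R ⊗[ℂ] S R →ₗ[ℂ] ℂ := Tr ∘ₗ LinearMap.mul' ℂ R ∘ₗ m2 R

/-- the ⊗⊠-piece. -/
def F3 (Tr : R →ₗ[ℂ] ℂ) : S R ⊗[ℂ] S R →ₗ[ℂ] ℂ := Tr ∘ₗ LinearMap.mul' ℂ R ∘ₗ m3 R

/-- the ⊠⊠-piece. -/
def F4 (Tr : R →ₗ[ℂ] ℂ) : S R ⊗[ℂ] S R →ₗ[ℂ] ℂ := Tr ∘ₗ LinearMap.mul' ℂ R ∘ₗ m4 R Tr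

variable {R}

lemma hF1 {Tr : R →ₗ[ℂ] ℂ} (htr : ∀ x y : R, Tr (x * y) = Tr (y * x)) (u v : S R) :
    F1 R Tr (u ⊗ₜ v) = F1 R Tr (v ⊗ₜ u) := by
  have : F1 R Tr = (F1 R Tr) ∘ₗ (TensorProduct.comm ℂ (S R) (S R)).toLinearMap := by
    ext U W P Q
    simp [F1, m1_tmul]
    rw [htr P U, htr W Q]
  simpa using DFunLike.congr_fun this (u ⊗ₜ v)

lemma hF23 {Tr : R →ₗ[ℂ] ℂ} (htr : ∀ x y : R, Tr (x * y) = Tr (y * x)) (u v : S R) :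
    F2 R Tr (u ⊗ₜ v) = F3 R Tr (v ⊗ₜ u) := by
  have : F2 R Tr = (F3 R Tr) ∘ₗ (TensorProduct.comm ℂ (S R) (S R)).toLinearMap := by
    ext U W P Q
    simp [F2, F3, m2_tmul, m3_tmul]
    rw [show U * (P * W * Q) = (U * (P * W)) * Q by noncomm_ring, htr,
        show Q * U * P * W = Q * (U * (P * W)) by noncomm_ring]
  simpa using DFunLike.congr_fun this (u ⊗ₜ v)

lemma hF4 {Tr : R →ₗ[ℂ] ℂ} (htr : ∀ x y : R, Tr (x * y) = Tr (y * x)) (u v : S R) :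
    F4 R Tr (u ⊗ₜ v) = F4 R Tr (v ⊗ₜ u) := by
  have : F4 R Tr = (F4 R Tr) ∘ₗ (TensorProduct.comm ℂ (S R) (S R)).toLinearMap := by
    ext U W P Q
    simp [F4, m4_tmul]
    rw [htr W P, htr U Q]
    ring
  simpa using DFunLike.congr_fun this (u ⊗ₜ v)

variable (R)

/-- `Tr_A` is tracial on `(A, ⋆)` whenever `Tr` is tracial on `R`. -/
theorem TrA_tracial (Tr : R →ₗ[ℂ] ℂ) (htr : ∀ x y : R, Tr (x * y) = Tr (y * x)) :
    ∀ a b : A R, TrA R Tr (star' R Tr a b) = TrA R Tr (star' R Tr b a) := by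
  rintro ⟨x, y⟩ ⟨p, q⟩
  show F1 R Tr (x ⊗ₜ p) + Tr ((LinearMap.mul' ℂ R) (m2 R (y ⊗ₜ p) + m3 R (x ⊗ₜ q) + m4 R Tr (y ⊗ₜ q)))
     = F1 R Tr (p ⊗ₜ x) + Tr ((LinearMap.mul' ℂ R) (m2 R (q ⊗ₜ x) + m3 R (p ⊗ₜ y) + m4 R Tr (q ⊗ₜ y)))
  simp only [map_add]
  have h2 : Tr ((LinearMap.mul' ℂ R) (m2 R (y ⊗ₜ p))) = Tr ((LinearMap.mul' ℂ R) (m3 R (p ⊗ₜ y))) :=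
    hF23 htr y p
  have h3 : Tr ((LinearMap.mul' ℂ R) (m3 R (x ⊗ₜ q))) = Tr ((LinearMap.mul' ℂ R) (m2 R (q ⊗ₜ x))) :=
    (hF23 htr q x).symm
  have h4 : Tr ((LinearMap.mul' ℂ R) (m4 R Tr (y ⊗ₜ q))) = Tr ((LinearMap.mul' ℂ R) (m4 R Tr (q ⊗ₜ y))) :=
    hF4 htr y q
  rw [hF1 htr x p, h2, h3, h4]
  ring

end FRG
end
end

section
/- For every invertible element a of the algebra (A, ⋆) (i.e. with two-sided ⋆-inverse), and every b in the ideal R⊠R, a ⋆ b and b ⋆ a lie in R⊠R; consequently the quotient algebra A/(R⊠R) is isomorphic to R^op ⊗ R. -/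
open TensorProduct

noncomputable section
namespace FRG

variable (R : Type*) [Ring R] [Algebra ℂ R]

/-- the ⊠-component of `A`, as a ℂ-subspace. -/
def idealBox : Submodule ℂ (A R) := (⊥ : Submodule ℂ (S R)).prod (⊤ : Submodule ℂ (S R))


variable {R}

/-- the map `U ⊗ W ↦ op U ⊗ W` as a linear equivalence. -/
def beta : S R ≃ₗ[ℂ] Rᵐᵒᵖ ⊗[ℂ] R :=
  TensorProduct.congr (MulOpposite.opLinearEquiv ℂ) (LinearEquiv.refl ℂ R)

lemma beta_m1 (u v : S R) : beta (m1 R (u ⊗ₜ[ℂ] v)) = beta u * beta v := by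
  induction u using TensorProduct.induction_on with
  | zero => simp [TensorProduct.zero_tmul]
  | tmul U W =>
    induction v using TensorProduct.induction_on with
    | zero => simp [TensorProduct.tmul_zero]
    | tmul P Q =>
      simp [beta, m1, mulRev, Algebra.TensorProduct.tmul_mul_tmul]
    | add p q hp hq =>
      simp only [TensorProduct.tmul_add, map_add, hp, hq, mul_add]
  | add p q hp hq =>
    simp only [TensorProduct.add_tmul, map_add, hp, hq, add_mul]

lemma mem_idealBox_iff (b : A R) : b ∈ idealBox R ↔ b.1 = 0 := by
  simp [idealBox, Submodule.mem_prod]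

variable (R)

/-- for every ⋆-invertible `a` and every `b` in the ideal `R⊠R`, both `a ⋆ b`
and `b ⋆ a` lie in `R⊠R`; consequently the quotient `A/(R⊠R)` is isomorphic (as a ℂ-algebra,
i.e. by a linear equivalence carrying the induced product to the product) to `Rᵒᵖ ⊗ R`. -/

theorem quotient_iso_op_tensor (Tr : R →ₗ[ℂ] ℂ) :
    (∀ a : A R,
      (∃ a' : A R, star' R Tr a a' = otimes R 1 1 ∧ star' R Tr a' a = otimes R 1 1) →
      ∀ b : A R, b ∈ idealBox R →
        star' R Tr a b ∈ idealBox R ∧ star' R Tr b a ∈ idealBox R) ∧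
    ∃ φ : (A R ⧸ idealBox R) ≃ₗ[ℂ] Rᵐᵒᵖ ⊗[ℂ] R,
      ∀ x y : A R,
        φ (Submodule.Quotient.mk (star' R Tr x y)) =
          φ (Submodule.Quotient.mk x) * φ (Submodule.Quotient.mk y) := by
  constructor
  · intro a _ b hb
    rw [mem_idealBox_iff] at hb
    constructor <;> rw [mem_idealBox_iff] <;>
      simp [star', hb, TensorProduct.tmul_zero, TensorProduct.zero_tmul]
  · set f : A R →ₗ[ℂ] Rᵐᵒᵖ ⊗[ℂ] R :=
      (beta.toLinearMap) ∘ₗ (LinearMap.fst ℂ (S R) (S R)) with hf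
    have hker : idealBox R ≤ LinearMap.ker f := by
      intro b hb
      rw [mem_idealBox_iff] at hb
      simp [hf, hb]
    set g : Rᵐᵒᵖ ⊗[ℂ] R →ₗ[ℂ] A R ⧸ idealBox R :=
      (idealBox R).mkQ ∘ₗ (LinearMap.inl ℂ (S R) (S R)) ∘ₗ beta.symm.toLinearMap with hg
    have hmk : ∀ x : A R, ((idealBox R).liftQ f hker) (Submodule.Quotient.mk x) = beta x.1 := by
      intro x; rfl
    have key : ∀ x : A R, g (beta x.1) = Submodule.Quotient.mk x := by
      intro x
      simp only [hg, LinearMap.comp_apply, LinearEquiv.coe_coe, LinearEquiv.symm_apply_apply,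
        LinearMap.inl_apply, Submodule.mkQ_apply]
      rw [Submodule.Quotient.eq]
      rw [mem_idealBox_iff]
      simp
    refine ⟨LinearEquiv.ofLinear ((idealBox R).liftQ f hker) g ?_ ?_, ?_⟩
    · apply TensorProduct.ext'
      intro u w
      have : (beta.symm (u ⊗ₜ[ℂ] w) : S R) = (MulOpposite.unop u) ⊗ₜ[ℂ] w := by
        simp [beta]
      simp only [LinearMap.comp_apply, hg, LinearMap.id_apply, LinearEquiv.coe_coe,
        LinearMap.inl_apply, Submodule.mkQ_apply]
      rw [this, hmk]
      simp [beta]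
    · apply LinearMap.ext
      intro q
      obtain ⟨x, rfl⟩ := Submodule.Quotient.mk_surjective _ q
      simp only [LinearMap.comp_apply, LinearMap.id_apply]
      rw [hmk, key]
    · intro x y
      simp only [LinearEquiv.ofLinear_apply]
      rw [hmk, hmk, hmk]
      show beta (m1 R (x.1 ⊗ₜ[ℂ] y.1)) = _
      exact beta_m1 x.1 y.1


end FRG
end
end

section
/- For any word W = X_{ℓ_1}⋯X_{ℓ_k} (k ≥ 2) in the free algebra, the composition of noncommutative derivatives ∂_{X_b} ∘ ∂_{X_a} applied to the cyclic word of W equals the sum over all ordered pairs (u, v) of distinct positions with ℓ_u = a, ℓ_v = b of π_1(W) ⊗ π_2(W), where π_1(W) is the (possibly empty) word strictly between position u and position v read cyclically, and π_2(W) is the word strictly between position v and position u read cyclically. -/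
open TensorProduct

noncomputable section
namespace FRG

variable (n : ℕ)

/-- the free algebra ℂ⟨X_1,…,X_n⟩. -/
abbrev F := FreeAlgebra ℂ (Fin n)

/-- the monomial associated to a word (list of letters). -/
def wordProd (w : List (Fin n)) : F n := (w.map (FreeAlgebra.ι ℂ)).prod

/-- cyclic derivative `D_a` of the cyclic word of `w`. -/
def cycDeriv (a : Fin n) (w : List (Fin n)) : F n :=
  ∑ j : Fin w.length,
    if w.get j = a then wordProd n (w.drop (j.1 + 1) ++ w.take j.1) else 0

/-- noncommutative derivative `∂_a` of the (ordinary) word `w`. -/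
def wordDeriv (a : Fin n) (w : List (Fin n)) : F n ⊗[ℂ] F n :=
  ∑ j : Fin w.length,
    if w.get j = a then wordProd n (w.take j.1) ⊗ₜ[ℂ] wordProd n (w.drop (j.1 + 1)) else 0

/-- `Hess_{a,b}(Tr w) = ∂_{X_a} ∘ ∂_{X_b} (Tr w)`. -/
def Hess (a b : Fin n) (w : List (Fin n)) : F n ⊗[ℂ] F n :=
  ∑ u : Fin w.length,
    if w.get u = b then wordDeriv n a (w.drop (u.1 + 1) ++ w.take u.1) else 0

/-- the cyclic segment of `w` strictly between positions `u` and `v`. -/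
def seg (w : List (Fin n)) (u v : Fin w.length) : List (Fin n) :=
  (w.rotate (u.1 + 1)).take ((v.1 + w.length - (u.1 + 1)) % w.length)

/-- `Δ_{a,b}(P,Q) = D_a P ⊠ D_b Q + D_a Q ⊠ D_b P` (the ⊠-part of the double-trace Hessian),
represented in `F ⊗ F`. -/
def Delta (a b : Fin n) (p q : List (Fin n)) : F n ⊗[ℂ] F n :=
  cycDeriv n a p ⊗ₜ[ℂ] cycDeriv n b q + cycDeriv n a q ⊗ₜ[ℂ] cycDeriv n b p


/-! ### arithmetic helpers -/

lemma mod_cancel {k u x : ℕ} (hu : u < k) (hx : x < k) :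
    ((u + 1 + x) % k + k - (u + 1)) % k = x := by
  rcases Nat.lt_or_ge (u + 1 + x) k with h | h
  · rw [Nat.mod_eq_of_lt h]
    have h2 : u + 1 + x + k - (u + 1) = x + k := by omega
    rw [h2, Nat.add_mod_right, Nat.mod_eq_of_lt hx]
  · have h2 : (u + 1 + x) % k = u + 1 + x - k := by
      rw [Nat.mod_eq_sub_mod h, Nat.mod_eq_of_lt (by omega)]
    rw [h2]
    have h3 : u + 1 + x - k + k - (u + 1) = x := by omega
    rw [h3, Nat.mod_eq_of_lt hx]

lemma mod_cancel2 {k u x : ℕ} (hu : u < k) (hx : x + 1 < k) :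
    (u + k - ((u + 1 + x) % k + 1)) % k = k - 2 - x := by
  rcases Nat.lt_or_ge (u + 1 + x) k with h | h
  · rw [Nat.mod_eq_of_lt h]
    have h2 : u + k - (u + 1 + x + 1) = k - 2 - x := by omega
    rw [h2, Nat.mod_eq_of_lt (by omega)]
  · have h2 : (u + 1 + x) % k = u + 1 + x - k := by
      rw [Nat.mod_eq_sub_mod h, Nat.mod_eq_of_lt (by omega)]
    rw [h2]
    have h3 : u + k - (u + 1 + x - k + 1) = k + (k - 2 - x) := by omega
    rw [h3, Nat.add_mod_left, Nat.mod_eq_of_lt (by omega)]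

lemma mod_shift (k u j i : ℕ) :
    (i + ((u + 1 + j) % k + 1)) % k = (u + 1 + (j + 1 + i)) % k := by
  have h : (i + ((u + 1 + j) % k + 1)) % k = (i + (u + 1 + j + 1)) % k :=
    Nat.ModEq.add_left i (Nat.ModEq.add_right 1 (Nat.mod_modEq _ _))
  rw [h]
  congr 1
  omega

lemma e_ne {k u j : ℕ} (hu : u < k) (hj : j < k - 1) : (u + 1 + j) % k ≠ u := by
  intro h
  have h2 := mod_cancel hu (show j < k by omega)
  rw [h, show u + k - (u + 1) = k - 1 by omega, Nat.mod_eq_of_lt (by omega)] at h2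
  omega

lemma d_lt {k u v : ℕ} (hu : u < k) (hv : v < k) (hne : v ≠ u) :
    (v + k - (u + 1)) % k < k - 1 := by
  rcases Nat.lt_or_ge v (u + 1) with h | h
  · rw [Nat.mod_eq_of_lt (by omega)]; omega
  · rw [show v + k - (u + 1) = v - (u + 1) + k by omega, Nat.add_mod_right,
      Nat.mod_eq_of_lt (by omega)]
    omega

lemma e_d {k u v : ℕ} (hu : u < k) (hv : v < k) :
    (u + 1 + (v + k - (u + 1)) % k) % k = v := by
  have h : (u + 1 + (v + k - (u + 1)) % k) % k = (u + 1 + (v + k - (u + 1))) % k :=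
    Nat.ModEq.add_left _ (Nat.mod_modEq _ _)
  rw [h, show u + 1 + (v + k - (u + 1)) = v + k by omega, Nat.add_mod_right,
    Nat.mod_eq_of_lt hv]

/-! ### list helpers -/

lemma rotate_eq (w : List (Fin n)) (u : Fin w.length) :
    w.rotate (u.1 + 1) = (w.drop (u.1 + 1) ++ w.take u.1) ++ [w.get u] := by
  rw [List.rotate_eq_drop_append_take (by omega : u.1 + 1 ≤ w.length), List.append_assoc]
  congr 1
  rw [List.get_eq_getElem, List.take_concat_get']

lemma len_w' (w : List (Fin n)) (u : Fin w.length) :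
    (w.drop (u.1 + 1) ++ w.take u.1).length = w.length - 1 := by
  simp [List.length_drop, List.length_take]
  omega

lemma getElem_w' (w : List (Fin n)) (u : Fin w.length) (t : ℕ)
    (ht : t < (w.drop (u.1 + 1) ++ w.take u.1).length)
    (ht' : (u.1 + 1 + t) % w.length < w.length) :
    (w.drop (u.1 + 1) ++ w.take u.1)[t] = w[(u.1 + 1 + t) % w.length] := by
  have hlen := len_w' n w u
  have hb : t < (w.rotate (u.1 + 1)).length := by
    rw [List.length_rotate]; omega
  have h1 := List.getElem_rotate w (u.1 + 1) t hb
  simp only [rotate_eq, List.getElem_append_left ht,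
    show t + (u.1 + 1) = u.1 + 1 + t from Nat.add_comm _ _] at h1
  exact h1

lemma seg_take (w : List (Fin n)) (u : Fin w.length)
    (j : Fin (w.drop (u.1 + 1) ++ w.take u.1).length)
    (hlt : (u.1 + 1 + j.1) % w.length < w.length) :
    seg n w u ⟨(u.1 + 1 + j.1) % w.length, hlt⟩ = (w.drop (u.1 + 1) ++ w.take u.1).take j.1 := by
  have hlen := len_w' n w u
  have hj : j.1 < w.length := by have := j.isLt; omega
  unfold seg
  simp only
  rw [mod_cancel u.isLt hj, rotate_eq, List.take_append_of_le_length (by omega)]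

lemma seg_drop (w : List (Fin n)) (u : Fin w.length)
    (j : Fin (w.drop (u.1 + 1) ++ w.take u.1).length)
    (hlt : (u.1 + 1 + j.1) % w.length < w.length) :
    seg n w ⟨(u.1 + 1 + j.1) % w.length, hlt⟩ u = (w.drop (u.1 + 1) ++ w.take u.1).drop (j.1 + 1) := by
  have hlen := len_w' n w u
  have hj : j.1 + 1 < w.length := by have := j.isLt; omega
  have hm : (u.1 + w.length - ((u.1 + 1 + j.1) % w.length + 1)) % w.length
      = w.length - 2 - j.1 := mod_cancel2 u.isLt hj
  apply List.ext_getElem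
  · simp only [seg, List.length_take, List.length_rotate, List.length_drop, hm, hlen]
    omega
  · intro i h1 h2
    simp only [seg] at h1 ⊢
    rw [List.getElem_take, List.getElem_rotate, List.getElem_drop,
      getElem_w' n w u (j.1 + 1 + i) (by simp only [List.length_take, List.length_rotate, hm, hlen] at h1; omega)
        (Nat.mod_lt _ (by omega))]
    congr 1
    exact mod_shift w.length u.1 j.1 i

/-! ### the per-position identity -/

lemma inner (b : Fin n) (w : List (Fin n)) (hw : 2 ≤ w.length) (u : Fin w.length) :
    wordDeriv n b (w.drop (u.1 + 1) ++ w.take u.1)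
      = ∑ v : Fin w.length,
          if u ≠ v ∧ w.get v = b then
            wordProd n (seg n w u v) ⊗ₜ[ℂ] wordProd n (seg n w v u)
          else 0 := by
  classical
  have hlen := len_w' n w u
  rw [← Finset.sum_erase (f := fun v : Fin w.length =>
      if u ≠ v ∧ w.get v = b then
        wordProd n (seg n w u v) ⊗ₜ[ℂ] wordProd n (seg n w v u) else 0)
    (a := u) Finset.univ (by simp)]
  unfold wordDeriv
  refine Finset.sum_bij'
    (fun (j : Fin (w.drop (u.1 + 1) ++ w.take u.1).length) _ =>
      (⟨(u.1 + 1 + j.1) % w.length, Nat.mod_lt _ (by omega)⟩ : Fin w.length))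
    (fun v hv =>
      (⟨(v.1 + w.length - (u.1 + 1)) % w.length, by
        rw [hlen]; exact d_lt u.isLt v.isLt fun h => (Finset.mem_erase.1 hv).1 (Fin.ext h)⟩ :
        Fin (w.drop (u.1 + 1) ++ w.take u.1).length))
    ?_ ?_ ?_ ?_ ?_
  · intro j _
    refine Finset.mem_erase.2 ⟨?_, Finset.mem_univ _⟩
    intro h
    exact e_ne u.isLt (hlen ▸ j.isLt) (congrArg Fin.val h)
  · intro v hv; exact Finset.mem_univ _
  · intro j _
    apply Fin.ext
    exact mod_cancel u.isLt (by have := j.isLt; omega)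
  · intro v hv
    apply Fin.ext
    exact e_d u.isLt v.isLt
  · intro j _
    have hne : u ≠ (⟨(u.1 + 1 + j.1) % w.length, Nat.mod_lt _ (by omega)⟩ : Fin w.length) := by
      intro h
      exact e_ne u.isLt (hlen ▸ j.isLt) (congrArg Fin.val h).symm
    have hget : (w.drop (u.1 + 1) ++ w.take u.1).get j
        = w.get ⟨(u.1 + 1 + j.1) % w.length, Nat.mod_lt _ (by omega)⟩ := by
      simp only [List.get_eq_getElem]
      exact getElem_w' n w u j.1 j.isLt (Nat.mod_lt _ (by omega))
    rw [hget, seg_take n w u j, seg_drop n w u j]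
    simp only [hne, ne_eq, not_false_iff, true_and]


/-- for a word `w` of length `≥ 2`, `∂_{X_b} ∘ ∂_{X_a}` of the cyclic word of `w`
equals the sum, over ordered pairs of distinct positions `(u,v)` carrying the letters `a`, `b`
respectively, of `π₁(W) ⊗ π₂(W)` where `π₁` (resp. `π₂`) is the cyclic segment strictly between
`u` and `v` (resp. `v` and `u`). -/
theorem double_deriv_cyclic (a b : Fin n) (w : List (Fin n)) (hw : 2 ≤ w.length) :
    (∑ u : Fin w.length,
        if w.get u = a then wordDeriv n b (w.drop (u.1 + 1) ++ w.take u.1) else 0)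
      = ∑ u : Fin w.length, ∑ v : Fin w.length,
          if u ≠ v ∧ w.get u = a ∧ w.get v = b then
            wordProd n (seg n w u v) ⊗ₜ[ℂ] wordProd n (seg n w v u)
          else 0 := by
  refine Finset.sum_congr rfl fun u _ => ?_
  by_cases ha : w.get u = a
  · rw [if_pos ha, inner n b w hw u]
    refine Finset.sum_congr rfl fun v _ => ?_
    have ha' : w[(u : ℕ)] = a := ha
    simp [ha']
  · rw [if_neg ha]
    refine (Finset.sum_eq_zero fun v _ => ?_).symm
    rw [if_neg]
    tauto


end FRG
end
end
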